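/- If Ker L^Ψ_I ∩ W = {0}, then Ker L^Ψ_I = Img L^Φ_I, where I ∈ GL_n(ℝ) is the identity matrix (so its columns are the standard basis vectors e_1,…,e_n). -/

import Mathlib

open scoped RealInnerProductSpace

noncomputable section

/-- `ℝ^n` with the Euclidean inner product and norm. -/
abbrev E (n : ℕ) : Type := EuclideanSpace ℝ (Fin n)

/-- The symmetric bilinear map `Q_v(ξ,η) = ⟨ξ,η⟩·v − ⟨ξ,v⟩·η − ⟨η,v⟩·ξ`. -/
def Qv {n : ℕ} (v ξ η : E n) : E n := ⟪ξ, η⟫ • v - ⟪ξ, v⟫ • η - ⟪η, v⟫ • ξ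

/-- The bracket `[Q,Q']` of two (symmetric bilinear) maps. -/
def brk {n : ℕ} (Q Q' : E n → E n → E n) (ξ η θ : E n) : E n :=
  (Q ξ (Q' η θ) + Q η (Q' θ ξ) + Q θ (Q' ξ η))
    - (Q' ξ (Q η θ) + Q' η (Q θ ξ) + Q' θ (Q ξ η))

/-- A map `ℝ^n × ℝ^n → ℝ^n` is a symmetric bilinear map. -/
def IsSymmBilin {n : ℕ} (q : E n → E n → E n) : Prop :=
  (∀ ξ η, q ξ η = q η ξ) ∧ ∀ ξ, IsLinearMap ℝ (q ξ)

/-- The standard basis vectors `e_1, …, e_n` of `ℝ^n`. -/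
def stdE (n : ℕ) (i : Fin n) : E n := EuclideanSpace.single i 1

/-- The `i`-th component of `L^Φ_B (A', B')`, where `v = v_i` is the `i`-th column of `B`
and `ω = ω_i` the `i`-th column of `B'`. -/
def LPhiC {n : ℕ} (A' : E n →ₗ[ℝ] E n) (v ω : E n) (ξ η : E n) : E n :=
  A' (Qv v ξ η) - Qv v (A' ξ) η - Qv v ξ (A' η) + Qv ω ξ η

/-- `(q_1,…,q_n)` lies in the kernel of `L^Ψ_B`, where `v i` are the columns of `B`. -/
def KerPsi {n : ℕ} (v : Fin n → E n) (q : Fin n → E n → E n → E n) : Prop :=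
  ∀ i j : Fin n, i < j → ∀ ξ η θ : E n,
    brk (q i) (Qv (v j)) ξ η θ = brk (q j) (Qv (v i)) ξ η θ

/-- `(q_1,…,q_n)` lies in the subspace `W`; `i0` is the index of the first coordinate. -/
def memW {n : ℕ} (i0 : Fin n) (q : Fin n → E n → E n → E n) : Prop :=
  (∀ j, q j (stdE n j) (stdE n j) = 0) ∧
  (∀ i j, ⟪stdE n i, q j (stdE n i) (stdE n i)⟫ + ⟪stdE n j, q i (stdE n j) (stdE n j)⟫ = 0) ∧
  (∀ j, ⟪stdE n i0, q i0 (stdE n j) (stdE n j)⟫ = 0)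

/-! Every `L^Φ_I(A', ω)` lies in `Ker L^Ψ_I` by a polynomial identity. Conversely, the
conditions defining `W` only involve the values `⟪e_k, q_l(e_m, e_m)⟫`, and subtracting
`L^Φ_I(A', ω)` for an explicit `A'` and `ω` built from these values makes them hold. For `q` in
the kernel the difference then lies in `Ker L^Ψ_I ∩ W`, hence vanishes. -/

variable {n : ℕ}

section Bracket

/-- Differentiating the `GL_n`-equivariance of the bracket at `[Q_v, Q_w] = 0` gives
`[A·Q_v, Q_w] + [Q_v, A·Q_w] = 0`; together with antisymmetry of the bracket and
`[Q_x, Q_w] = 0` this is the identity. -/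
lemma brk_LPhiC_Qv_comm (A : E n →ₗ[ℝ] E n) (v w x y ξ η θ : E n) :
    brk (LPhiC A v x) (Qv w) ξ η θ = brk (LPhiC A w y) (Qv v) ξ η θ := by
  simp only [brk, LPhiC, Qv, map_sub, map_smul, inner_sub_left, inner_sub_right,
    real_inner_smul_left, real_inner_smul_right, inner_add_left, inner_add_right,
    smul_sub, smul_smul, real_inner_comm]
  module

lemma brk_sub_left (f g : E n → E n → E n) (w ξ η θ : E n) :
    brk (fun x y => f x y - g x y) (Qv w) ξ η θ
      = brk f (Qv w) ξ η θ - brk g (Qv w) ξ η θ := by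
  simp only [brk, Qv, inner_sub_left, inner_sub_right, sub_smul, smul_sub]
  module

lemma KerPsi.sub {v : Fin n → E n} {q q' : Fin n → E n → E n → E n}
    (hq : KerPsi v q) (hq' : KerPsi v q') : KerPsi v (fun i ξ η => q i ξ η - q' i ξ η) := by
  intro i j hij ξ η θ
  rw [brk_sub_left, brk_sub_left, hq i j hij, hq' i j hij]

lemma kerPsi_LPhiC (A : E n →ₗ[ℝ] E n) (v ω : Fin n → E n) :
    KerPsi v (fun i => LPhiC A (v i) (ω i)) :=
  fun i j _ ξ η θ => brk_LPhiC_Qv_comm A (v i) (v j) (ω i) (ω j) ξ η θ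

end Bracket

section SymmBilin

lemma IsSymmBilin.sub {f g : E n → E n → E n} (hf : IsSymmBilin f) (hg : IsSymmBilin g) :
    IsSymmBilin (fun x y => f x y - g x y) := by
  refine ⟨fun ξ η => by simp only [hf.1 ξ η, hg.1 ξ η], fun ξ => ?_⟩
  exact ((hf.2 ξ).mk' _ - (hg.2 ξ).mk' _).isLinear

lemma isSymmBilin_LPhiC (A : E n →ₗ[ℝ] E n) (v ω : E n) : IsSymmBilin (LPhiC A v ω) := by
  refine ⟨fun ξ η => ?_, fun ξ => ⟨fun x y => ?_, fun c x => ?_⟩⟩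
  · simp only [LPhiC, Qv, map_sub, map_smul, real_inner_comm]
    module
  · simp only [LPhiC, Qv, inner_add_left, inner_add_right, map_add, map_smul, map_sub,
      add_smul, smul_add]
    module
  · simp only [LPhiC, Qv, real_inner_smul_left, real_inner_smul_right, map_smul, map_sub,
      smul_smul, smul_sub, smul_add]
    module

end SymmBilin

section Evaluation

variable (A : E n →ₗ[ℝ] E n) {v w : E n} (ω : E n)

lemma LPhiC_apply_base (hv : ⟪v, v⟫ = 1) : LPhiC A v ω v v = A v + ω - (2 * ⟪v, ω⟫) • v := by
  simp only [LPhiC, Qv, hv, map_sub, one_smul, real_inner_comm]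
  module

lemma inner_LPhiC_diag (hw : ⟪w, w⟫ = 1) (hvw : ⟪v, w⟫ = 0) :
    ⟪w, LPhiC A v ω w w⟫ = ⟪w, A v⟫ + 2 * ⟪v, A w⟫ - ⟪w, ω⟫ := by
  rw [real_inner_comm] at hvw
  simp only [LPhiC, Qv, inner_sub_right, inner_add_right, real_inner_smul_right,
    real_inner_comm, hw, hvw, one_smul, zero_smul, sub_zero]
  ring

lemma inner_base_LPhiC_diag (hv : ⟪v, v⟫ = 1) (hw : ⟪w, w⟫ = 1) (hvw : ⟪v, w⟫ = 0) :
    ⟪v, LPhiC A v ω w w⟫ = ⟪v, A v⟫ - 2 * ⟪w, A w⟫ + ⟪v, ω⟫ := by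
  have hwv : ⟪w, v⟫ = 0 := by rwa [real_inner_comm]
  simp only [LPhiC, Qv, inner_sub_right, inner_add_right, real_inner_smul_right,
    real_inner_comm, hv, hw, hvw, hwv, one_smul, zero_smul, sub_zero]
  ring

end Evaluation

lemma inner_stdE_stdE (i j : Fin n) : ⟪stdE n i, stdE n j⟫ = if i = j then 1 else 0 := by
  simp [stdE, EuclideanSpace.inner_single_left]

lemma inner_stdE_toEuclideanLin (M : Matrix (Fin n) (Fin n) ℝ) (k j : Fin n) :
    ⟪stdE n k, Matrix.toEuclideanLin M (stdE n j)⟫ = M k j := by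
  simp [stdE, EuclideanSpace.inner_single_left, Matrix.toLpLin_apply, Matrix.mulVec_single]

section Normalization

variable (i0 : Fin n) (q : Fin n → E n → E n → E n)

def diagCoeff (k l m : Fin n) : ℝ := ⟪stdE n k, q l (stdE n m) (stdE n m)⟫

/-- The off-diagonal entries are chosen so that the second condition defining `W` holds
for `normalizedTuple`, the diagonal ones so that the third does. -/
def normalizingMatrix : Matrix (Fin n) (Fin n) ℝ :=
  Matrix.of fun k j =>
    if k = j then (if j = i0 then 0 else -(diagCoeff q i0 i0 i0 + diagCoeff q i0 i0 j) / 2)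
    else (diagCoeff q k j k + diagCoeff q j k j + diagCoeff q k j j + diagCoeff q j k k) / 8

def normalizingMap : E n →ₗ[ℝ] E n := Matrix.toEuclideanLin (normalizingMatrix i0 q)

/-- Since `ω ↦ ω - 2⟪e_j, ω⟫ e_j` is an involution, this solves `ω - 2⟪e_j, ω⟫ e_j = D`,
which by `LPhiC_apply_base` makes `normalizedTuple i0 q j (e_j) (e_j)` vanish. -/
def normalizingShift (j : Fin n) : E n :=
  let D := q j (stdE n j) (stdE n j) - normalizingMap i0 q (stdE n j)
  D - (2 * ⟪stdE n j, D⟫) • stdE n j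

def normalizedTuple (i : Fin n) (ξ η : E n) : E n :=
  q i ξ η - LPhiC (normalizingMap i0 q) (stdE n i) (normalizingShift i0 q i) ξ η

lemma inner_stdE_normalizingMap (k j : Fin n) :
    ⟪stdE n k, normalizingMap i0 q (stdE n j)⟫ = normalizingMatrix i0 q k j :=
  inner_stdE_toEuclideanLin _ k j

lemma inner_stdE_normalizingShift (k j : Fin n) :
    ⟪stdE n k, normalizingShift i0 q j⟫
      = if k = j then normalizingMatrix i0 q j j - diagCoeff q j j j
        else diagCoeff q k j j - normalizingMatrix i0 q k j := by
  simp only [normalizingShift, inner_sub_right, real_inner_smul_right,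
    inner_stdE_normalizingMap, inner_stdE_stdE, diagCoeff]
  split_ifs with hkj
  · subst hkj; ring
  · ring

lemma normalizedTuple_stdE_self (j : Fin n) :
    normalizedTuple i0 q j (stdE n j) (stdE n j) = 0 := by
  have hj : ⟪stdE n j, stdE n j⟫ = 1 := by rw [inner_stdE_stdE, if_pos rfl]
  rw [normalizedTuple, LPhiC_apply_base _ _ hj, normalizingShift]
  simp only [inner_sub_right, real_inner_smul_right, hj]
  module

lemma inner_normalizedTuple_diag_of_ne {k l : Fin n} (hkl : k ≠ l) :
    ⟪stdE n k, normalizedTuple i0 q l (stdE n k) (stdE n k)⟫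
      = diagCoeff q k l k + diagCoeff q k l l
        - 2 * (normalizingMatrix i0 q k l + normalizingMatrix i0 q l k) := by
  have hk : ⟪stdE n k, stdE n k⟫ = 1 := by rw [inner_stdE_stdE, if_pos rfl]
  have hlk : ⟪stdE n l, stdE n k⟫ = 0 := by rw [inner_stdE_stdE, if_neg hkl.symm]
  rw [normalizedTuple, inner_sub_right, inner_LPhiC_diag _ _ hk hlk,
    inner_stdE_normalizingMap, inner_stdE_normalizingMap, inner_stdE_normalizingShift,
    if_neg hkl]
  unfold diagCoeff
  ring

lemma inner_base_normalizedTuple_diag (j : Fin n) :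
    ⟪stdE n i0, normalizedTuple i0 q i0 (stdE n j) (stdE n j)⟫ = 0 := by
  rcases eq_or_ne j i0 with rfl | hj
  · simp [normalizedTuple_stdE_self]
  have hi0 : ⟪stdE n i0, stdE n i0⟫ = 1 := by rw [inner_stdE_stdE, if_pos rfl]
  have hj' : ⟪stdE n j, stdE n j⟫ = 1 := by rw [inner_stdE_stdE, if_pos rfl]
  have hi0j : ⟪stdE n i0, stdE n j⟫ = 0 := by rw [inner_stdE_stdE, if_neg hj.symm]
  rw [normalizedTuple, inner_sub_right, inner_base_LPhiC_diag _ _ hi0 hj' hi0j,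
    inner_stdE_normalizingMap, inner_stdE_normalizingMap, inner_stdE_normalizingShift,
    if_pos rfl]
  simp only [normalizingMatrix, Matrix.of_apply, if_true, if_neg hj, diagCoeff]
  ring

lemma memW_normalizedTuple : memW i0 (normalizedTuple i0 q) := by
  refine ⟨normalizedTuple_stdE_self i0 q, fun i j => ?_, inner_base_normalizedTuple_diag i0 q⟩
  rcases eq_or_ne i j with rfl | hij
  · simp [normalizedTuple_stdE_self]
  rw [inner_normalizedTuple_diag_of_ne i0 q hij,
    inner_normalizedTuple_diag_of_ne i0 q hij.symm]
  simp only [normalizingMatrix, Matrix.of_apply, if_neg hij, if_neg hij.symm]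
  ring

lemma isSymmBilin_normalizedTuple (hq : ∀ i, IsSymmBilin (q i)) (i : Fin n) :
    IsSymmBilin (normalizedTuple i0 q i) :=
  (hq i).sub (isSymmBilin_LPhiC _ _ _)

lemma KerPsi.normalizedTuple (hq : KerPsi (stdE n) q) : KerPsi (stdE n) (normalizedTuple i0 q) :=
  hq.sub (kerPsi_LPhiC _ _ _)

end Normalization

/-- Lemma `lemma:H`: if `Ker L^Ψ_I ∩ W = {0}`, then `Ker L^Ψ_I = Img L^Φ_I`,
where `I` is the identity matrix, whose columns are the standard basis vectors. -/
theorem stmt4 {n : ℕ} (hn : 1 ≤ n)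
    (hW : ∀ q : Fin n → E n → E n → E n, (∀ i, IsSymmBilin (q i)) →
      KerPsi (stdE n) q → memW ⟨0, by omega⟩ q → ∀ i ξ η, q i ξ η = 0) :
    ∀ q : Fin n → E n → E n → E n, (∀ i, IsSymmBilin (q i)) →
      (KerPsi (stdE n) q ↔ ∃ (A' : E n →ₗ[ℝ] E n) (ω : Fin n → E n),
        ∀ i ξ η, q i ξ η = LPhiC A' (stdE n i) (ω i) ξ η) := by
  intro q hq
  constructor
  · intro hker
    set i0 : Fin n := ⟨0, by omega⟩
    have hzero := hW (normalizedTuple i0 q) (isSymmBilin_normalizedTuple i0 q hq)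
      (hker.normalizedTuple i0 q) (memW_normalizedTuple i0 q)
    exact ⟨normalizingMap i0 q, normalizingShift i0 q, fun i ξ η => sub_eq_zero.mp (hzero i ξ η)⟩
  · rintro ⟨A', ω, h⟩
    obtain rfl : q = fun i => LPhiC A' (stdE n i) (ω i) := funext fun i => funext₂ (h i)
    exact kerPsi_LPhiC A' (stdE n) ω

end
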